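/- Let X₀ = L²(Ω) and X₁ = H¹₀(Ω) for a bounded Lipschitz domain Ω ⊂ ℝ^d, and let β ∈ (0,1). For each small t > 0 let χ_t : ℝ → ℝ be smooth with χ_t∘r ≡ 0 on the strip S_{t/2} = {x ∈ Ω : dist(x,∂Ω) < t/2}, χ_t∘r ≡ 1 on Ω \ S_t, and ‖∇^j(χ_t∘r)‖_{L^∞} ≤ C t^{−j} for j ∈ {0,1}. Then there is a constant C > 0 such that for all v ∈ C_c^∞(Ω) and small t > 0, the K-functional satisfies K(v, t; L²(Ω), H¹₀(Ω)) ≤ C t^{1−β} ‖v‖_{H^1_β(Ω)}. -/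

import Mathlib

open MeasureTheory Real Set

/-- auxiliary: locally constant functions have zero derivative. -/
lemma aux_fderiv_zero_of_eventually_const {E : Type*} [NormedAddCommGroup E]
    [NormedSpace ℝ E] (f : E → ℝ) (c : ℝ) (x : E)
    (h : ∀ᶠ y in nhds x, f y = c) : fderiv ℝ f x = 0 := by
  have h2 : f =ᶠ[nhds x] fun _ => c := h
  rw [h2.fderiv_eq, fderiv_fun_const]
  rfl

/-- auxiliary: `sqrt` is subadditive. -/
lemma aux_sqrt_add_le (x y : ℝ) (hx : 0 ≤ x) (hy : 0 ≤ y) :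
    Real.sqrt (x + y) ≤ Real.sqrt x + Real.sqrt y := by
  have h : x + y ≤ (Real.sqrt x + Real.sqrt y)^2 := by
    nlinarith [Real.sq_sqrt hx, Real.sq_sqrt hy, Real.sqrt_nonneg x, Real.sqrt_nonneg y,
      mul_nonneg (Real.sqrt_nonneg x) (Real.sqrt_nonneg y)]
  calc Real.sqrt (x + y) ≤ Real.sqrt ((Real.sqrt x + Real.sqrt y)^2) := Real.sqrt_le_sqrt h
  _ = Real.sqrt x + Real.sqrt y := Real.sqrt_sq (by positivity)

/-- auxiliary: continuity of `r^γ · u` when `r > 0` on the support of `u`. -/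
lemma aux_cont_rpow_mul {E : Type*} [NormedAddCommGroup E] [NormedSpace ℝ E]
    (r u : E → ℝ) (hrc : Continuous r) (hu : Continuous u)
    (hrpos : ∀ x ∈ tsupport u, 0 < r x) (γ : ℝ) :
    Continuous fun x => r x ^ γ * u x := by
  rw [continuous_iff_continuousAt]
  intro x
  by_cases hx : x ∈ tsupport u
  · have h1 : ContinuousAt (fun y => r y ^ γ) x :=
      (Real.continuousAt_rpow_const (r x) γ (Or.inl (hrpos x hx).ne')).comp hrc.continuousAt
    exact h1.mul hu.continuousAt
  · have ho : ∀ᶠ y in nhds x, u y = 0 := by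
      filter_upwards [(isClosed_tsupport u).isOpen_compl.mem_nhds hx] with y hy
      exact image_eq_zero_of_notMem_tsupport hy
    have heq : (fun y => r y ^ γ * u y) =ᶠ[nhds x] fun _ => (0:ℝ) := by
      filter_upwards [ho] with y hy
      simp [hy]
    exact continuousAt_const.congr heq.symm

set_option maxHeartbeats 1000000 in
/-- K-functional bound `K(v,t; L²(Ω), H¹₀(Ω)) ≤ C t^{1-β} ‖v‖_{H^1_β(Ω)}`
for small `t`, given a family of cutoff functions `χ_t` of the distance function `r`.
The K-functional infimum is taken over the dense subspace of smooth compactly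
supported functions in `Ω` (representing `H¹₀(Ω)`). -/
theorem Kfunctional_bound_H1beta
    (d : ℕ) (hd : 0 < d) (Ω : Set (EuclideanSpace ℝ (Fin d)))
    (hΩo : IsOpen Ω) (hΩb : Bornology.IsBounded Ω) (hΩne : Ω.Nonempty)
    (β : ℝ) (hβ : β ∈ Set.Ioo (0:ℝ) 1)
    (r : EuclideanSpace ℝ (Fin d) → ℝ)
    (hr : ∀ x, r x = Metric.infDist x (frontier Ω))
    (t₀ C₀ : ℝ) (ht₀ : 0 < t₀) (hC₀ : 0 < C₀)
    (χ : ℝ → ℝ → ℝ)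
    (hχ : ∀ t ∈ Set.Ioo (0:ℝ) t₀,
      ContDiff ℝ (⊤ : ℕ∞) (fun x => χ t (r x)) ∧
      (∀ x ∈ Ω, r x < t/2 → χ t (r x) = 0) ∧
      (∀ x ∈ Ω, t ≤ r x → χ t (r x) = 1) ∧
      (∀ x, |χ t (r x)| ≤ C₀) ∧
      (∀ x, ‖fderiv ℝ (fun y => χ t (r y)) x‖ ≤ C₀ / t)) :
    ∃ C > 0, ∀ v : EuclideanSpace ℝ (Fin d) → ℝ,
      ContDiff ℝ (⊤ : ℕ∞) v → HasCompactSupport v → tsupport v ⊆ Ω →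
      ∀ t ∈ Set.Ioo (0:ℝ) t₀,
      sInf { a : ℝ | ∃ w : EuclideanSpace ℝ (Fin d) → ℝ,
          ContDiff ℝ (⊤ : ℕ∞) w ∧ HasCompactSupport w ∧ tsupport w ⊆ Ω ∧
          a = Real.sqrt (∫ x, (v x - w x)^2)
            + t * Real.sqrt ((∫ x, (w x)^2) + ∫ x, ‖fderiv ℝ w x‖^2) }
        ≤ C * t ^ (1 - β) *
          Real.sqrt ((∫ x in Ω, (r x ^ β * ‖fderiv ℝ v x‖)^2)
            + ∫ x in Ω, (r x ^ (β - 1) * |v x|)^2) := by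
  -- basic geometric facts
  haveI : Nonempty (Fin d) := ⟨⟨0, hd⟩⟩
  have hfr : (frontier Ω).Nonempty := by
    rw [nonempty_frontier_iff]
    exact ⟨hΩne, fun h => NormedSpace.unbounded_univ ℝ _ (h ▸ hΩb)⟩
  have hrc : Continuous r := by
    have : r = fun x => Metric.infDist x (frontier Ω) := funext hr
    rw [this]
    exact Metric.continuous_infDist_pt _
  have hrpos : ∀ x ∈ Ω, 0 < r x := by
    intro x hx
    rw [hr]
    refine (isClosed_frontier.notMem_iff_infDist_pos hfr).1 fun hmem => ?_
    have h := hΩo.inter_frontier_eq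
    exact absurd (Set.mem_inter hx hmem) (by rw [h]; exact Set.notMem_empty x)
  obtain ⟨z, hz⟩ := hfr
  obtain ⟨ρ, hρ⟩ := (Metric.isBounded_iff_subset_closedBall z).1 hΩb.closure
  set R : ℝ := max ρ 1 with hRdef
  have hR1 : (0:ℝ) < R := lt_of_lt_of_le one_pos (le_max_right _ _)
  have hRle : ∀ x ∈ Ω, r x ≤ R := by
    intro x hx
    rw [hr]
    refine (Metric.infDist_le_dist_of_mem hz).trans ?_
    have h := hρ (subset_closure hx)
    rw [Metric.mem_closedBall] at h
    exact h.trans (le_max_left _ _)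
  have hβ1 : (0:ℝ) < β := hβ.1
  have hβ2 : β < 1 := hβ.2
  refine ⟨(1 + C₀) + C₀ * R ^ (1-β) * t₀ ^ β + Real.sqrt 2 * C₀ * 2 ^ β + 1, by positivity, ?_⟩
  intro v hv hvc hvs t ht
  obtain ⟨hχ1, hχ2, hχ3, hχ4, hχ5⟩ := hχ t ht
  obtain ⟨ht1, ht2⟩ := ht
  have htb : 0 < t ^ (1-β) := Real.rpow_pos_of_pos ht1 _
  have htnb : 0 < t ^ (-β) := Real.rpow_pos_of_pos ht1 _
  have h2b : (0:ℝ) < 2 ^ β := Real.rpow_pos_of_pos two_pos _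
  have hRb : (0:ℝ) < R ^ (1-β) := Real.rpow_pos_of_pos hR1 _
  have ht0b : (0:ℝ) < t₀ ^ β := Real.rpow_pos_of_pos ht₀ _
  -- the candidate w
  set w : EuclideanSpace ℝ (Fin d) → ℝ := fun x => χ t (r x) * v x with hwdef
  have hw : ContDiff ℝ (⊤ : ℕ∞) w := hχ1.mul hv
  have hws' : tsupport w ⊆ tsupport v := by
    apply closure_minimal _ (isClosed_tsupport v)
    intro x hx
    rw [Function.mem_support] at hx
    refine subset_closure (Function.mem_support.2 fun h => hx ?_)
    simp [hwdef, h]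
  have hwc : HasCompactSupport w := hvc.of_isClosed_subset (isClosed_tsupport w) hws'
  have hwsΩ : tsupport w ⊆ Ω := hws'.trans hvs
  -- base pointwise inequality |v| ≤ s^{1-β} r^{β-1} |v| when r ≤ s
  have hbase : ∀ s : ℝ, 0 < s → ∀ x ∈ Ω, r x ≤ s →
      |v x| ≤ s ^ (1-β) * (r x ^ (β-1) * |v x|) := by
    intro s hs x hx hxs
    have h0 := hrpos x hx
    have h1 : r x ^ (1-β) ≤ s ^ (1-β) := Real.rpow_le_rpow h0.le hxs (by linarith)
    have h2 : r x ^ (β-1) * r x ^ (1-β) = 1 := by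
      rw [← Real.rpow_add h0]; norm_num
    have h3 : 0 ≤ r x ^ (β-1) := Real.rpow_nonneg h0.le _
    nlinarith [abs_nonneg (v x), mul_le_mul_of_nonneg_left h1 (mul_nonneg h3 (abs_nonneg (v x)))]
  -- continuity and integrability of the weighted integrands
  have hfvc : Continuous (fderiv ℝ v) := hv.continuous_fderiv (by simp)
  have hsuppf : ∀ x ∈ tsupport (fun x => ‖fderiv ℝ v x‖), 0 < r x := by
    intro x hx
    have hsub : Function.support (fun x => ‖fderiv ℝ v x‖) ⊆ tsupport v := by
      intro y hy
      rw [Function.mem_support, norm_ne_zero_iff] at hy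
      exact support_fderiv_subset ℝ (Function.mem_support.2 hy)
    exact hrpos x (hvs (closure_minimal hsub (isClosed_tsupport v) hx))
  have hsuppg : ∀ x ∈ tsupport (fun x => |v x|), 0 < r x := by
    intro x hx
    have hsub : Function.support (fun x => |v x|) ⊆ tsupport v := by
      intro y hy
      rw [Function.mem_support, abs_ne_zero] at hy
      exact subset_closure (Function.mem_support.2 hy)
    exact hrpos x (hvs (closure_minimal hsub (isClosed_tsupport v) hx))
  have hcontf : Continuous fun x => (r x ^ β * ‖fderiv ℝ v x‖)^2 :=
    (aux_cont_rpow_mul r _ hrc hfvc.norm hsuppf β).pow 2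
  have hcontg : Continuous fun x => (r x ^ (β-1) * |v x|)^2 :=
    (aux_cont_rpow_mul r _ hrc hv.continuous.abs hsuppg (β-1)).pow 2
  have hcsf : HasCompactSupport fun x => (r x ^ β * ‖fderiv ℝ v x‖)^2 := by
    refine HasCompactSupport.intro hvc fun x hx => ?_
    have h : fderiv ℝ v x = 0 := by
      by_contra h
      exact hx (support_fderiv_subset ℝ (Function.mem_support.2 h))
    simp [h]
  have hcsg : HasCompactSupport fun x => (r x ^ (β-1) * |v x|)^2 := by
    refine HasCompactSupport.intro hvc fun x hx => ?_
    simp [image_eq_zero_of_notMem_tsupport hx]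
  have hIf : Integrable fun x => (r x ^ β * ‖fderiv ℝ v x‖)^2 :=
    hcontf.integrable_of_hasCompactSupport hcsf
  have hIg : Integrable fun x => (r x ^ (β-1) * |v x|)^2 :=
    hcontg.integrable_of_hasCompactSupport hcsg
  -- integrability of the three left-hand integrands
  have hI1 : Integrable fun x => (v x - w x)^2 := by
    refine ((hv.continuous.sub hw.continuous).pow 2).integrable_of_hasCompactSupport ?_
    refine HasCompactSupport.intro hvc fun x hx => ?_
    have h0 : v x = 0 := image_eq_zero_of_notMem_tsupport hx
    simp [hwdef, h0]
  have hI2 : Integrable fun x => (w x)^2 := by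
    refine (hw.continuous.pow 2).integrable_of_hasCompactSupport ?_
    refine HasCompactSupport.intro hwc fun x hx => ?_
    simp [image_eq_zero_of_notMem_tsupport hx]
  have hI3 : Integrable fun x => ‖fderiv ℝ w x‖^2 := by
    refine ((hw.continuous_fderiv (by simp)).norm.pow 2).integrable_of_hasCompactSupport ?_
    refine HasCompactSupport.intro hwc fun x hx => ?_
    have h : fderiv ℝ w x = 0 := by
      by_contra h
      exact hx (support_fderiv_subset ℝ (Function.mem_support.2 h))
    simp [h]
  -- vanishing off Ω
  have hz1 : ∀ x ∉ Ω, (v x - w x)^2 = 0 := by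
    intro x hx
    have h0 : v x = 0 := image_eq_zero_of_notMem_tsupport fun h => hx (hvs h)
    simp [hwdef, h0]
  have hz2 : ∀ x ∉ Ω, (w x)^2 = 0 := by
    intro x hx
    simp [image_eq_zero_of_notMem_tsupport fun h => hx (hwsΩ h)]
  have hz3 : ∀ x ∉ Ω, ‖fderiv ℝ w x‖^2 = 0 := by
    intro x hx
    have h : fderiv ℝ w x = 0 := by
      by_contra h
      exact hx (hwsΩ (support_fderiv_subset ℝ (Function.mem_support.2 h)))
    simp [h]
  -- pointwise key estimates on Ω
  have key1 : ∀ x ∈ Ω, (v x - w x)^2 ≤ ((1+C₀)*t^(1-β))^2 * (r x ^ (β-1) * |v x|)^2 := by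
    intro x hx
    by_cases hxt : t ≤ r x
    · have h1 : w x = v x := by simp [hwdef, hχ3 x hx hxt]
      rw [h1]
      simp
      positivity
    · push_neg at hxt
      have h5 : |v x| ≤ t^(1-β)*(r x ^(β-1)*|v x|) := hbase t ht1 x hx hxt.le
      have h4 : |v x - w x| ≤ (1+C₀)*|v x| := by
        have he : v x - w x = (1 - χ t (r x)) * v x := by simp [hwdef]; ring
        rw [he, abs_mul]
        refine mul_le_mul_of_nonneg_right ?_ (abs_nonneg _)
        calc |1 - χ t (r x)| ≤ |(1:ℝ)| + |χ t (r x)| := abs_sub _ _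
          _ ≤ 1 + C₀ := by simp [hχ4 x]
      have h6 : |v x - w x| ≤ (1+C₀)*t^(1-β)*(r x ^(β-1)*|v x|) := by
        calc |v x - w x| ≤ (1+C₀)*|v x| := h4
          _ ≤ (1+C₀)*(t^(1-β)*(r x ^(β-1)*|v x|)) :=
            mul_le_mul_of_nonneg_left h5 (by linarith)
          _ = (1+C₀)*t^(1-β)*(r x ^(β-1)*|v x|) := by ring
      calc (v x - w x)^2 = |v x - w x|^2 := (sq_abs _).symm
        _ ≤ ((1+C₀)*t^(1-β)*(r x ^(β-1)*|v x|))^2 := by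
          exact pow_le_pow_left₀ (abs_nonneg _) h6 2
        _ = ((1+C₀)*t^(1-β))^2 * (r x ^(β-1)*|v x|)^2 := by ring
  have key2 : ∀ x ∈ Ω, (w x)^2 ≤ (C₀*R^(1-β))^2 * (r x ^ (β-1) * |v x|)^2 := by
    intro x hx
    have h5 : |v x| ≤ R^(1-β)*(r x ^(β-1)*|v x|) := hbase R hR1 x hx (hRle x hx)
    have h4 : |w x| ≤ C₀*|v x| := by
      rw [hwdef]
      simp only [abs_mul]
      exact mul_le_mul_of_nonneg_right (hχ4 x) (abs_nonneg _)
    have h6 : |w x| ≤ C₀*R^(1-β)*(r x ^(β-1)*|v x|) := by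
      calc |w x| ≤ C₀*|v x| := h4
        _ ≤ C₀*(R^(1-β)*(r x ^(β-1)*|v x|)) := mul_le_mul_of_nonneg_left h5 hC₀.le
        _ = C₀*R^(1-β)*(r x ^(β-1)*|v x|) := by ring
    calc (w x)^2 = |w x|^2 := (sq_abs _).symm
      _ ≤ (C₀*R^(1-β)*(r x ^(β-1)*|v x|))^2 := pow_le_pow_left₀ (abs_nonneg _) h6 2
      _ = (C₀*R^(1-β))^2 * (r x ^(β-1)*|v x|)^2 := by ring
  have key3 : ∀ x ∈ Ω, ‖fderiv ℝ w x‖^2 ≤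
      2*(C₀*2^β*t^(-β))^2 * ((r x ^ β * ‖fderiv ℝ v x‖)^2 + (r x ^ (β-1) * |v x|)^2) := by
    intro x hx
    have hp : 0 ≤ r x ^ β * ‖fderiv ℝ v x‖ :=
      mul_nonneg (Real.rpow_nonneg (hrpos x hx).le _) (norm_nonneg _)
    have hq : 0 ≤ r x ^ (β-1) * |v x| :=
      mul_nonneg (Real.rpow_nonneg (hrpos x hx).le _) (abs_nonneg _)
    have hA : 0 ≤ C₀*2^β*t^(-β) := by positivity
    by_cases h12 : r x < t/2
    · have hU : IsOpen (Ω ∩ r ⁻¹' (Set.Iio (t/2))) := hΩo.inter (isOpen_Iio.preimage hrc)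
      have hw0 : fderiv ℝ w x = 0 := by
        refine aux_fderiv_zero_of_eventually_const w 0 x ?_
        filter_upwards [hU.mem_nhds ⟨hx, h12⟩] with y hy
        simp [hwdef, hχ2 y hy.1 hy.2]
      rw [hw0]
      simp
      positivity
    · push_neg at h12
      have hdv : DifferentiableAt ℝ v x := hv.differentiable (by simp) x
      have hdχ : DifferentiableAt ℝ (fun y => χ t (r y)) x := hχ1.differentiable (by simp) x
      have hfd : fderiv ℝ w x
          = χ t (r x) • fderiv ℝ v x + v x • fderiv ℝ (fun y => χ t (r y)) x := by
        rw [hwdef]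
        exact fderiv_mul hdχ hdv
      have hn1 : ‖fderiv ℝ w x‖ ≤
          C₀*‖fderiv ℝ v x‖ + |v x| * ‖fderiv ℝ (fun y => χ t (r y)) x‖ := by
        rw [hfd]
        refine (norm_add_le _ _).trans ?_
        rw [norm_smul, norm_smul, Real.norm_eq_abs, Real.norm_eq_abs]
        exact add_le_add (mul_le_mul_of_nonneg_right (hχ4 x) (norm_nonneg _)) le_rfl
      -- gradient term
      have hterm1 : ‖fderiv ℝ v x‖ ≤ 2^β*t^(-β)*(r x ^ β * ‖fderiv ℝ v x‖) := by
        have hq2 : (t/2)^β ≤ r x ^ β := Real.rpow_le_rpow (by positivity) h12 hβ1.le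
        have hid : (2:ℝ)^β * t^(-β) * (t/2)^β = 1 := by
          rw [Real.div_rpow ht1.le (by norm_num), Real.rpow_neg ht1.le]
          have htβ : (0:ℝ) < t^β := Real.rpow_pos_of_pos ht1 _
          field_simp
        calc ‖fderiv ℝ v x‖ = (2^β * t^(-β) * (t/2)^β) * ‖fderiv ℝ v x‖ := by
              rw [hid]; ring
          _ = (2^β*t^(-β)*‖fderiv ℝ v x‖) * (t/2)^β := by ring
          _ ≤ (2^β*t^(-β)*‖fderiv ℝ v x‖) * r x ^ β :=
              mul_le_mul_of_nonneg_left hq2 (mul_nonneg (mul_nonneg h2b.le htnb.le)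
                (norm_nonneg (fderiv ℝ v x)))
          _ = 2^β*t^(-β)*(r x ^ β * ‖fderiv ℝ v x‖) := by ring
      -- cutoff-gradient term
      have hterm2 : |v x| * ‖fderiv ℝ (fun y => χ t (r y)) x‖ ≤
          C₀*t^(-β)*(r x ^ (β-1) * |v x|) := by
        by_cases hxt : t < r x
        · have hU : IsOpen (Ω ∩ r ⁻¹' (Set.Ioi t)) := hΩo.inter (isOpen_Ioi.preimage hrc)
          have hχ0 : fderiv ℝ (fun y => χ t (r y)) x = 0 := by
            refine aux_fderiv_zero_of_eventually_const _ 1 x ?_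
            filter_upwards [hU.mem_nhds ⟨hx, hxt⟩] with y hy
            exact hχ3 y hy.1 hy.2.le
          rw [hχ0]
          simp
          positivity
        · push_neg at hxt
          have h5 : |v x| ≤ t^(1-β)*(r x ^(β-1)*|v x|) := hbase t ht1 x hx hxt
          have hidt : t^(1-β) * (C₀/t) = C₀*t^(-β) := by
            rw [show (1:ℝ)-β = 1 + (-β) by ring, Real.rpow_add ht1, Real.rpow_one]
            field_simp
          calc |v x| * ‖fderiv ℝ (fun y => χ t (r y)) x‖
              ≤ (t^(1-β)*(r x ^(β-1)*|v x|)) * (C₀/t) := by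
                refine mul_le_mul h5 (hχ5 x) (norm_nonneg _) ?_
                positivity
            _ = (t^(1-β)*(C₀/t)) * (r x ^(β-1)*|v x|) := by ring
            _ = C₀*t^(-β)*(r x ^ (β-1) * |v x|) := by rw [hidt]
      have hone : (1:ℝ) ≤ 2^β := Real.one_le_rpow one_le_two hβ1.le
      have hN : ‖fderiv ℝ w x‖ ≤
          (C₀*2^β*t^(-β))*(r x ^ β * ‖fderiv ℝ v x‖) + (C₀*2^β*t^(-β))*(r x ^ (β-1) * |v x|) := by
        have h1 : C₀*‖fderiv ℝ v x‖ ≤ (C₀*2^β*t^(-β))*(r x ^ β * ‖fderiv ℝ v x‖) := by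
          calc C₀*‖fderiv ℝ v x‖ ≤ C₀*(2^β*t^(-β)*(r x ^ β * ‖fderiv ℝ v x‖)) :=
              mul_le_mul_of_nonneg_left hterm1 hC₀.le
            _ = (C₀*2^β*t^(-β))*(r x ^ β * ‖fderiv ℝ v x‖) := by ring
        have h2 : C₀*t^(-β)*(r x ^ (β-1) * |v x|) ≤ (C₀*2^β*t^(-β))*(r x ^ (β-1) * |v x|) := by
          refine mul_le_mul_of_nonneg_right ?_ hq
          nlinarith
        linarith [hterm2]
      nlinarith [norm_nonneg (fderiv ℝ w x),
        sq_nonneg ((C₀*2^β*t^(-β))*(r x ^ β * ‖fderiv ℝ v x‖)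
          - (C₀*2^β*t^(-β))*(r x ^ (β-1) * |v x|)),
        mul_self_le_mul_self (norm_nonneg (fderiv ℝ w x)) hN]
  -- integral-level estimates
  have hint1 : (∫ x, (v x - w x)^2) ≤ ((1+C₀)*t^(1-β))^2 * ∫ x in Ω, (r x ^ (β-1) * |v x|)^2 := by
    rw [← setIntegral_eq_integral_of_forall_compl_eq_zero hz1]
    calc (∫ x in Ω, (v x - w x)^2)
        ≤ ∫ x in Ω, ((1+C₀)*t^(1-β))^2 * (r x ^ (β-1)*|v x|)^2 :=
          setIntegral_mono_on hI1.integrableOn ((hIg.const_mul _).integrableOn)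
            hΩo.measurableSet key1
      _ = ((1+C₀)*t^(1-β))^2 * ∫ x in Ω, (r x ^ (β-1) * |v x|)^2 := integral_const_mul _ _
  have hint2 : (∫ x, (w x)^2) ≤ (C₀*R^(1-β))^2 * ∫ x in Ω, (r x ^ (β-1) * |v x|)^2 := by
    rw [← setIntegral_eq_integral_of_forall_compl_eq_zero hz2]
    calc (∫ x in Ω, (w x)^2)
        ≤ ∫ x in Ω, (C₀*R^(1-β))^2 * (r x ^ (β-1)*|v x|)^2 :=
          setIntegral_mono_on hI2.integrableOn ((hIg.const_mul _).integrableOn)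
            hΩo.measurableSet key2
      _ = (C₀*R^(1-β))^2 * ∫ x in Ω, (r x ^ (β-1) * |v x|)^2 := integral_const_mul _ _
  have hint3 : (∫ x, ‖fderiv ℝ w x‖^2) ≤ 2*(C₀*2^β*t^(-β))^2 *
      ((∫ x in Ω, (r x ^ β * ‖fderiv ℝ v x‖)^2) + ∫ x in Ω, (r x ^ (β-1) * |v x|)^2) := by
    have hIfg : Integrable fun x =>
        (r x ^ β * ‖fderiv ℝ v x‖)^2 + (r x ^ (β-1) * |v x|)^2 := hIf.add hIg
    have hIfg2 : Integrable fun x => 2*(C₀*2^β*t^(-β))^2 *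
        ((r x ^ β * ‖fderiv ℝ v x‖)^2 + (r x ^ (β-1) * |v x|)^2) := hIfg.const_mul _
    rw [← setIntegral_eq_integral_of_forall_compl_eq_zero hz3]
    calc (∫ x in Ω, ‖fderiv ℝ w x‖^2)
        ≤ ∫ x in Ω, 2*(C₀*2^β*t^(-β))^2 *
            ((r x ^ β * ‖fderiv ℝ v x‖)^2 + (r x ^ (β-1)*|v x|)^2) :=
          setIntegral_mono_on hI3.integrableOn hIfg2.integrableOn hΩo.measurableSet key3
      _ = 2*(C₀*2^β*t^(-β))^2 *
            ∫ x in Ω, ((r x ^ β * ‖fderiv ℝ v x‖)^2 + (r x ^ (β-1)*|v x|)^2) :=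
          integral_const_mul _ _
      _ = 2*(C₀*2^β*t^(-β))^2 *
            ((∫ x in Ω, (r x ^ β * ‖fderiv ℝ v x‖)^2) + ∫ x in Ω, (r x ^ (β-1) * |v x|)^2) := by
          rw [integral_add hIf.integrableOn hIg.integrableOn]
  -- pass to the infimum
  have hmem : Real.sqrt (∫ x, (v x - w x)^2)
      + t * Real.sqrt ((∫ x, (w x)^2) + ∫ x, ‖fderiv ℝ w x‖^2) ∈
      { a : ℝ | ∃ w' : EuclideanSpace ℝ (Fin d) → ℝ,
          ContDiff ℝ (⊤ : ℕ∞) w' ∧ HasCompactSupport w' ∧ tsupport w' ⊆ Ω ∧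
          a = Real.sqrt (∫ x, (v x - w' x)^2)
            + t * Real.sqrt ((∫ x, (w' x)^2) + ∫ x, ‖fderiv ℝ w' x‖^2) } :=
    ⟨w, hw, hwc, hwsΩ, rfl⟩
  have hbdd : BddBelow { a : ℝ | ∃ w' : EuclideanSpace ℝ (Fin d) → ℝ,
      ContDiff ℝ (⊤ : ℕ∞) w' ∧ HasCompactSupport w' ∧ tsupport w' ⊆ Ω ∧
      a = Real.sqrt (∫ x, (v x - w' x)^2)
        + t * Real.sqrt ((∫ x, (w' x)^2) + ∫ x, ‖fderiv ℝ w' x‖^2) } := by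
    refine ⟨0, fun a ha => ?_⟩
    obtain ⟨w', _, _, _, rfl⟩ := ha
    exact add_nonneg (Real.sqrt_nonneg _) (mul_nonneg ht1.le (Real.sqrt_nonneg _))
  refine (csInf_le hbdd hmem).trans ?_
  -- final arithmetic
  set If := ∫ x in Ω, (r x ^ β * ‖fderiv ℝ v x‖)^2 with hIfdef
  set Ig := ∫ x in Ω, (r x ^ (β-1) * |v x|)^2 with hIgdef
  have hIfnn : 0 ≤ If := setIntegral_nonneg hΩo.measurableSet fun x _ => sq_nonneg _
  have hIgnn : 0 ≤ Ig := setIntegral_nonneg hΩo.measurableSet fun x _ => sq_nonneg _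
  set S0 := Real.sqrt (If + Ig) with hS0def
  have hS0 : 0 ≤ S0 := Real.sqrt_nonneg _
  have hIgS : Real.sqrt Ig ≤ S0 := Real.sqrt_le_sqrt (by linarith)
  have h2v : 0 ≤ ∫ x, (w x)^2 := integral_nonneg fun x => sq_nonneg _
  have h3v : 0 ≤ ∫ x, ‖fderiv ℝ w x‖^2 := integral_nonneg fun x => sq_nonneg _
  have s1 : Real.sqrt (∫ x, (v x - w x)^2) ≤ (1+C₀)*t^(1-β)*S0 := by
    refine (Real.sqrt_le_sqrt hint1).trans ?_
    rw [Real.sqrt_mul (sq_nonneg _), Real.sqrt_sq (by positivity)]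
    exact mul_le_mul_of_nonneg_left hIgS (by positivity)
  have s2a : Real.sqrt (∫ x, (w x)^2) ≤ C₀*R^(1-β)*S0 := by
    refine (Real.sqrt_le_sqrt hint2).trans ?_
    rw [Real.sqrt_mul (sq_nonneg _), Real.sqrt_sq (by positivity)]
    exact mul_le_mul_of_nonneg_left hIgS (by positivity)
  have s2b : Real.sqrt (∫ x, ‖fderiv ℝ w x‖^2) ≤ Real.sqrt 2*(C₀*2^β*t^(-β))*S0 := by
    refine (Real.sqrt_le_sqrt hint3).trans ?_
    rw [Real.sqrt_mul (by positivity : (0:ℝ) ≤ 2*(C₀*2^β*t^(-β))^2),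
      Real.sqrt_mul (by norm_num : (0:ℝ) ≤ 2), Real.sqrt_sq (by positivity)]
  have hid1 : t * t^(-β) = t^(1-β) := by
    rw [show (1:ℝ)-β = 1 + (-β) by ring, Real.rpow_add ht1, Real.rpow_one]
  have hid2 : t ≤ t₀^β * t^(1-β) := by
    have h1 : t^β ≤ t₀^β := Real.rpow_le_rpow ht1.le ht2.le hβ1.le
    have h2 : t = t^β * t^(1-β) := by
      rw [← Real.rpow_add ht1]; norm_num
    calc t = t^β * t^(1-β) := h2
      _ ≤ t₀^β * t^(1-β) := mul_le_mul_of_nonneg_right h1 htb.le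
  calc Real.sqrt (∫ x, (v x - w x)^2)
      + t * Real.sqrt ((∫ x, (w x)^2) + ∫ x, ‖fderiv ℝ w x‖^2)
      ≤ (1+C₀)*t^(1-β)*S0
        + t * (Real.sqrt (∫ x, (w x)^2) + Real.sqrt (∫ x, ‖fderiv ℝ w x‖^2)) :=
        add_le_add s1 (mul_le_mul_of_nonneg_left (aux_sqrt_add_le _ _ h2v h3v) ht1.le)
    _ ≤ (1+C₀)*t^(1-β)*S0 + t * (C₀*R^(1-β)*S0 + Real.sqrt 2*(C₀*2^β*t^(-β))*S0) :=
        add_le_add_right (mul_le_mul_of_nonneg_left (add_le_add s2a s2b) ht1.le) _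
    _ = (1+C₀)*t^(1-β)*S0 + t*(C₀*R^(1-β))*S0 + Real.sqrt 2*C₀*2^β*(t*t^(-β))*S0 := by ring
    _ ≤ ((1 + C₀) + C₀ * R ^ (1-β) * t₀ ^ β + Real.sqrt 2 * C₀ * 2 ^ β + 1) * t ^ (1 - β) * S0 := by
        rw [hid1]
        have hb1 : t*(C₀*R^(1-β))*S0 ≤ (t₀^β * t^(1-β))*(C₀*R^(1-β))*S0 :=
          mul_le_mul_of_nonneg_right
            (mul_le_mul_of_nonneg_right hid2 (by positivity)) hS0
        have hb2 : 0 ≤ t^(1-β)*S0 := mul_nonneg htb.le hS0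
        have hs2 : 0 ≤ Real.sqrt 2 := Real.sqrt_nonneg 2
        nlinarith [hb1, hb2]
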